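/- Under NAG with L-smooth convex f, 0 < s ≤ 1/L and r ≥ 2, one has lim_{k→∞} k³ · min_{0 ≤ i ≤ k} ‖∇f(y_i)‖² = 0. -/

import Mathlib

/-!
For `0 < s ≤ 1 / L`, convexity and `L`-smoothness give the strengthened gradient inequality
`f a + ⟪∇f a, b - a⟫ + s / 2 * ‖∇f b - ∇f a‖² ≤ f b` (tilt `f` so that `a` becomes a minimizer
and take one gradient step of length `1 / L` from `b`).

Along NAG the point `z k = y k + (k / r) • (y k - x k)` performs a plain gradient step,
`z (k + 1) = z k - (s (k + r) / r) • ∇f (y k)`, and the energy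
`r² ‖z (k + 1) - x*‖² + s (k + 1) (k + 1 + r) (2 (f (y k) - f x*) - s ‖∇f (y k)‖²)`
is nonnegative and, for `r ≥ 2`, drops by at least `s² (k + 1) (k + 1 + r) / 2 * ‖∇f (y (k + 1))‖²`
at every step. Hence `∑ k² ‖∇f (y k)‖² < ∞`. The `≥ k / 2` indices in `(k / 2, k]` each
contribute at least `k² / 4` times the running minimum, so `k³ min_{i ≤ k} ‖∇f (y i)‖²` is at most
eight times a tail of a convergent series.
-/

open RealInnerProductSpace Filter Topology Finset

section Smooth

open Set

variable {E : Type*} [NormedAddCommGroup E] [InnerProductSpace ℝ E] [CompleteSpace E]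
  {f : E → ℝ} {g : E → E} {L : ℝ}

theorem HasGradientAt.hasDerivAt_comp_add_smul {g' a v : E} {t : ℝ}
    (h : HasGradientAt f g' (a + t • v)) :
    HasDerivAt (fun t : ℝ => f (a + t • v)) ⟪g', v⟫ t := by
  have hline : HasDerivAt (fun t : ℝ => a + t • v) v t := by
    simpa using ((hasDerivAt_id t).smul_const v).const_add a
  simpa [Function.comp_def] using h.hasFDerivAt.comp_hasDerivAt t hline

theorem IsLocalMin.hasGradientAt_eq_zero {g' a : E} (hmin : IsLocalMin f a)
    (h : HasGradientAt f g' a) : g' = 0 :=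
  (InnerProductSpace.toDual ℝ E).map_eq_zero_iff.mp (hmin.hasFDerivAt_eq_zero h.hasFDerivAt)

theorem ConvexOn.add_inner_le_of_hasGradientAt (hf : ConvexOn ℝ univ f) {g' a : E}
    (h : HasGradientAt f g' a) (b : E) : f a + ⟪g', b - a⟫ ≤ f b := by
  have hline : ConvexOn ℝ univ (fun t : ℝ => f (a + t • (b - a))) := by
    simpa [Function.comp_def, AffineMap.lineMap_apply, add_comm]
      using hf.comp_affineMap (AffineMap.lineMap a b)
  have hd : HasDerivAt (fun t : ℝ => f (a + t • (b - a))) ⟪g', b - a⟫ 0 :=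
    HasGradientAt.hasDerivAt_comp_add_smul (by simpa using h)
  have := hline.le_slope_of_hasDerivAt (mem_univ 0) (mem_univ 1) one_pos hd
  simp only [slope_def_field, zero_smul, add_zero, one_smul, add_sub_cancel, sub_zero,
    div_one] at this
  linarith

theorem le_add_inner_add_of_lipschitz_gradient (hg : ∀ z, HasGradientAt f (g z) z)
    (hlip : ∀ z w, ‖g z - g w‖ ≤ L * ‖z - w‖) (a b : E) :
    f b ≤ f a + ⟪g a, b - a⟫ + L / 2 * ‖b - a‖ ^ 2 := by
  set v := b - a
  let φ : ℝ → ℝ := fun t => f (a + t • v) - t * ⟪g a, v⟫ - L / 2 * t ^ 2 * ‖v‖ ^ 2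
  have hφ : ∀ t, HasDerivAt φ (⟪g (a + t • v) - g a, v⟫ - L * t * ‖v‖ ^ 2) t := by
    intro t
    have h := (((hg (a + t • v)).hasDerivAt_comp_add_smul).sub
      ((hasDerivAt_id t).mul_const ⟪g a, v⟫)).sub
      (((hasDerivAt_pow 2 t).const_mul (L / 2)).mul_const (‖v‖ ^ 2))
    exact h.congr_deriv (by rw [inner_sub_left]; ring)
  have hanti : AntitoneOn φ (Icc 0 1) := by
    refine antitoneOn_of_hasDerivWithinAt_nonpos (convex_Icc 0 1)
      (fun t _ => (hφ t).continuousAt.continuousWithinAt)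
      (fun t _ => (hφ t).hasDerivWithinAt) fun t ht => ?_
    rw [interior_Icc] at ht
    rw [sub_nonpos]
    calc ⟪g (a + t • v) - g a, v⟫ ≤ ‖g (a + t • v) - g a‖ * ‖v‖ := real_inner_le_norm _ _
      _ ≤ L * ‖t • v‖ * ‖v‖ := by
        gcongr
        simpa using hlip (a + t • v) a
      _ = L * t * ‖v‖ ^ 2 := by rw [norm_smul, Real.norm_of_nonneg ht.1.le]; ring
  have := hanti (left_mem_Icc.2 zero_le_one) (right_mem_Icc.2 zero_le_one) zero_le_one
  simp only [one_smul, add_sub_cancel, one_mul, one_pow, mul_one, zero_smul, add_zero, zero_mul,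
    sub_zero, ne_eq, OfNat.ofNat_ne_zero, not_false_eq_true, zero_pow, mul_zero,
    tsub_le_iff_right, φ, v] at this
  linarith

theorem add_sq_norm_gradient_div_le_of_forall_le (hL : 0 < L)
    (hg : ∀ z, HasGradientAt f (g z) z) (hlip : ∀ z w, ‖g z - g w‖ ≤ L * ‖z - w‖) {a : E}
    (hmin : ∀ z, f a ≤ f z) (b : E) : f a + ‖g b‖ ^ 2 / (2 * L) ≤ f b := by
  have hstep : b - L⁻¹ • g b - b = -(L⁻¹ • g b) := by abel
  have hdesc := le_add_inner_add_of_lipschitz_gradient hg hlip b (b - L⁻¹ • g b)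
  rw [hstep, inner_neg_right, real_inner_smul_right, real_inner_self_eq_norm_sq, norm_neg,
    norm_smul, Real.norm_of_nonneg (inv_nonneg.2 hL.le)] at hdesc
  have hval : -(L⁻¹ * ‖g b‖ ^ 2) + L / 2 * (L⁻¹ * ‖g b‖) ^ 2 = -(‖g b‖ ^ 2 / (2 * L)) := by
    field_simp
    ring
  linarith [hmin (b - L⁻¹ • g b)]

theorem ConvexOn.add_inner_add_sq_norm_sub_div_le (hf : ConvexOn ℝ univ f) (hL : 0 < L)
    (hg : ∀ z, HasGradientAt f (g z) z) (hlip : ∀ z w, ‖g z - g w‖ ≤ L * ‖z - w‖) (a b : E) :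
    f a + ⟪g a, b - a⟫ + ‖g b - g a‖ ^ 2 / (2 * L) ≤ f b := by
  set h : E → ℝ := fun z => f z - ⟪g a, z⟫
  have hh : ConvexOn ℝ univ h := hf.sub ((innerₛₗ ℝ (g a)).concaveOn convex_univ)
  have hgh : ∀ z, HasGradientAt h (g z - g a) z := by
    intro z
    rw [hasGradientAt_iff_hasFDerivAt, map_sub]
    exact (hg z).hasFDerivAt.sub (innerSL ℝ (g a)).hasFDerivAt
  have hlip' : ∀ z w, ‖(g z - g a) - (g w - g a)‖ ≤ L * ‖z - w‖ := by
    simpa only [sub_sub_sub_cancel_right] using hlip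
  have hmin : ∀ z, h a ≤ h z := fun z => by
    simpa using hh.add_inner_le_of_hasGradientAt (hgh a) z
  have := add_sq_norm_gradient_div_le_of_forall_le hL hgh hlip' hmin b
  simp only [h, inner_sub_right] at this ⊢
  linarith

end Smooth

theorem summable_of_succ_add_le {u a : ℕ → ℝ} (hu : ∀ n, 0 ≤ u n) (ha : ∀ n, 0 ≤ a n)
    (h : ∀ n, u (n + 1) + a n ≤ u n) : Summable a := by
  have hpartial : ∀ n, ∑ i ∈ range n, a i + u n ≤ u 0 := by
    intro n
    induction n with
    | zero => simp
    | succ n ih => rw [sum_range_succ]; linarith [h n]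
  exact summable_of_sum_range_le ha fun n => by linarith [hpartial n, hu n]

theorem cube_mul_inf'_range_le {a : ℕ → ℝ} (ha : ∀ n, 0 ≤ a n) (k : ℕ) :
    (k : ℝ) ^ 3 * (range (k + 1)).inf' nonempty_range_add_one a
      ≤ 8 * ∑ i ∈ Ico (k / 2 + 1) (k + 1), (i : ℝ) ^ 2 * a i := by
  set m := (range (k + 1)).inf' nonempty_range_add_one a
  have hm : 0 ≤ m := le_inf' _ _ fun i _ => ha i
  have hterm : ∀ i ∈ Ico (k / 2 + 1) (k + 1), (k : ℝ) ^ 2 / 4 * m ≤ (i : ℝ) ^ 2 * a i := by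
    intro i hi
    rw [mem_Ico] at hi
    have hki : (k : ℝ) ≤ 2 * i := by exact_mod_cast (by omega : k ≤ 2 * i)
    gcongr
    · nlinarith [k.cast_nonneg (α := ℝ)]
    · exact inf'_le _ (mem_range.2 (by omega))
  have hcard : (k : ℝ) ≤ 2 * (#(Ico (k / 2 + 1) (k + 1)) : ℝ) := by
    rw [Nat.card_Ico]
    exact_mod_cast (by omega : k ≤ 2 * (k + 1 - (k / 2 + 1)))
  have hsum := card_nsmul_le_sum _ _ _ hterm
  rw [nsmul_eq_mul] at hsum
  nlinarith [mul_le_mul_of_nonneg_right hcard (by positivity : 0 ≤ (k : ℝ) ^ 2 / 4 * m)]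

theorem tendsto_cube_mul_inf'_range_of_summable {a : ℕ → ℝ} (ha : ∀ n, 0 ≤ a n)
    (hsum : Summable fun n : ℕ => (n : ℝ) ^ 2 * a n) :
    Tendsto (fun k : ℕ => (k : ℝ) ^ 3 * (range (k + 1)).inf' nonempty_range_add_one a)
      atTop (𝓝 0) := by
  have hS := hsum.hasSum.tendsto_sum_nat
  have hhalf : Tendsto (fun k : ℕ => k / 2 + 1) atTop atTop :=
    (tendsto_add_atTop_nat 1).comp (Nat.tendsto_div_const_atTop two_ne_zero)
  have htail : Tendsto (fun k : ℕ => 8 * ∑ i ∈ Ico (k / 2 + 1) (k + 1), (i : ℝ) ^ 2 * a i)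
      atTop (𝓝 0) := by
    have := ((hS.comp (tendsto_add_atTop_nat 1)).sub (hS.comp hhalf)).const_mul 8
    rw [sub_self, mul_zero] at this
    refine this.congr fun k => ?_
    rw [Function.comp_apply, Function.comp_apply, sum_Ico_eq_sub _ (by omega)]
  exact squeeze_zero (fun k => mul_nonneg (by positivity) (le_inf' _ _ fun i _ => ha i))
    (cube_mul_inf'_range_le ha) htail

section NAG

variable {E : Type*} [NormedAddCommGroup E] [InnerProductSpace ℝ E]
  {f : E → ℝ} {g : E → E} {s r : ℝ} {xs : E} {x y : ℕ → E}

noncomputable def nagZ (r : ℝ) (x y : ℕ → E) (k : ℕ) : E := y k + ((k : ℝ) / r) • (y k - x k)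

noncomputable def nagEnergy (f : E → ℝ) (g : E → E) (s r : ℝ) (xs : E) (x y : ℕ → E) (k : ℕ) :
    ℝ :=
  r ^ 2 * ‖nagZ r x y (k + 1) - xs‖ ^ 2
    + s * (k + 1) * (k + 1 + r) * (2 * (f (y k) - f xs) - s * ‖g (y k)‖ ^ 2)

theorem half_mul_sq_norm_le_sub
    (hf : ∀ a b, f a + ⟪g a, b - a⟫ + s / 2 * ‖g b - g a‖ ^ 2 ≤ f b)
    (hgxs : g xs = 0) (b : E) :
    s / 2 * ‖g b‖ ^ 2 ≤ f b - f xs := by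
  have := hf xs b
  rw [hgxs, inner_zero_left, sub_zero] at this
  linarith

theorem sub_add_half_mul_sq_norm_le_inner
    (hf : ∀ a b, f a + ⟪g a, b - a⟫ + s / 2 * ‖g b - g a‖ ^ 2 ≤ f b)
    (hgxs : g xs = 0) (a : E) :
    f a - f xs + s / 2 * ‖g a‖ ^ 2 ≤ ⟪g a, a - xs⟫ := by
  have := hf a xs
  rw [hgxs, zero_sub, norm_neg, ← neg_sub, inner_neg_right] at this
  linarith

theorem nag_descent
    (hf : ∀ a b, f a + ⟪g a, b - a⟫ + s / 2 * ‖g b - g a‖ ^ 2 ≤ f b)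
    (hx : ∀ k : ℕ, x (k + 1) = y k - s • g (y k)) (k : ℕ) :
    f (x (k + 1)) + s / 2 * ‖g (y k)‖ ^ 2 + s / 2 * ‖g (x (k + 1))‖ ^ 2 ≤ f (y k) := by
  have := hf (x (k + 1)) (y k)
  rw [hx k, sub_sub_cancel, real_inner_smul_right, ← hx k, norm_sub_sq_real,
    real_inner_comm] at this
  linarith

theorem nagZ_succ (hr : 0 < r) (hx : ∀ k : ℕ, x (k + 1) = y k - s • g (y k))
    (hy : ∀ k : ℕ, y (k + 1) = x (k + 1) + (((k : ℝ)) / ((k : ℝ) + r + 1)) • (x (k + 1) - x k))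
    (k : ℕ) : nagZ r x y (k + 1) = nagZ r x y k - (s * (k + r) / r) • g (y k) := by
  have hk : (k : ℝ) + r + 1 ≠ 0 := by positivity
  simp only [nagZ, hy k, hx k]
  push_cast
  match_scalars <;> field_simp <;> ring

theorem nagEnergy_nonneg
    (hf : ∀ a b, f a + ⟪g a, b - a⟫ + s / 2 * ‖g b - g a‖ ^ 2 ≤ f b)
    (hgxs : g xs = 0) (hs : 0 ≤ s) (hr : 0 ≤ r) (k : ℕ) :
    0 ≤ nagEnergy f g s r xs x y k := by
  have := half_mul_sq_norm_le_sub hf hgxs (y k)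
  unfold nagEnergy
  have : 0 ≤ 2 * (f (y k) - f xs) - s * ‖g (y k)‖ ^ 2 := by linarith
  positivity

theorem le_mul_inner_nagZ_sub_of_nag
    (hf : ∀ a b, f a + ⟪g a, b - a⟫ + s / 2 * ‖g b - g a‖ ^ 2 ≤ f b)
    (hgxs : g xs = 0) (hs : 0 ≤ s) (hr : 0 < r) (hx : ∀ k : ℕ, x (k + 1) = y k - s • g (y k))
    (k : ℕ) :
    r * (f (y (k + 1)) - f xs) + (k + 1) * (f (y (k + 1)) - f (y k))
      + s * (k + 1) / 2 * ‖g (y k)‖ ^ 2 + s * (2 * r + k + 1) / 4 * ‖g (y (k + 1))‖ ^ 2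
      ≤ r * ⟪g (y (k + 1)), nagZ r x y (k + 1) - xs⟫ := by
  have hsplit : r * ⟪g (y (k + 1)), nagZ r x y (k + 1) - xs⟫
      = r * ⟪g (y (k + 1)), y (k + 1) - xs⟫
        + (k + 1) * ⟪g (y (k + 1)), y (k + 1) - x (k + 1)⟫ := by
    rw [nagZ, add_sub_right_comm, inner_add_right, real_inner_smul_right]
    push_cast
    field_simp
  have hpar : ‖g (y (k + 1))‖ ^ 2
      ≤ 2 * ‖g (x (k + 1))‖ ^ 2 + 2 * ‖g (x (k + 1)) - g (y (k + 1))‖ ^ 2 := by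
    have := parallelogram_law_with_norm ℝ (g (x (k + 1))) (g (y (k + 1)) - g (x (k + 1)))
    rw [add_sub_cancel, norm_sub_rev (g (y (k + 1)))] at this
    nlinarith [sq_nonneg ‖g (x (k + 1)) - (g (y (k + 1)) - g (x (k + 1)))‖]
  have hmom : f (y (k + 1)) - f (y k) + s / 2 * ‖g (y k)‖ ^ 2 + s / 4 * ‖g (y (k + 1))‖ ^ 2
      ≤ ⟪g (y (k + 1)), y (k + 1) - x (k + 1)⟫ := by
    have h := hf (y (k + 1)) (x (k + 1))
    rw [← neg_sub, inner_neg_right] at h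
    linarith [nag_descent hf hx k, mul_le_mul_of_nonneg_left hpar hs]
  have hk : (0 : ℝ) ≤ k + 1 := by positivity
  rw [hsplit]
  linarith [mul_le_mul_of_nonneg_left (sub_add_half_mul_sq_norm_le_inner hf hgxs (y (k + 1)))
    hr.le, mul_le_mul_of_nonneg_left hmom hk]

theorem nagEnergy_succ_add_le
    (hf : ∀ a b, f a + ⟪g a, b - a⟫ + s / 2 * ‖g b - g a‖ ^ 2 ≤ f b)
    (hgxs : g xs = 0) (hs : 0 ≤ s) (hr : 2 ≤ r) (hx : ∀ k : ℕ, x (k + 1) = y k - s • g (y k))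
    (hy : ∀ k : ℕ, y (k + 1) = x (k + 1) + (((k : ℝ)) / ((k : ℝ) + r + 1)) • (x (k + 1) - x k))
    (k : ℕ) :
    nagEnergy f g s r xs x y (k + 1) + s ^ 2 * (k + 1) * (k + 1 + r) / 2 * ‖g (y (k + 1))‖ ^ 2
      ≤ nagEnergy f g s r xs x y k := by
  have hr0 : 0 < r := by linarith
  set G := g (y (k + 1))
  set Z := nagZ r x y (k + 1) - xs
  have hnorm : r ^ 2 * ‖nagZ r x y (k + 1 + 1) - xs‖ ^ 2
      = r ^ 2 * ‖Z‖ ^ 2 - 2 * s * (k + 1 + r) * (r * ⟪G, Z⟫)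
        + s ^ 2 * (k + 1 + r) ^ 2 * ‖G‖ ^ 2 := by
    rw [nagZ_succ hr0 hx hy, sub_right_comm, norm_sub_sq_real, real_inner_smul_right, norm_smul,
      Real.norm_eq_abs, mul_pow, sq_abs, real_inner_comm]
    push_cast
    field_simp
    ring
  have hlow := mul_le_mul_of_nonneg_left (le_mul_inner_nagZ_sub_of_nag hf hgxs hs hr0 hx k)
    (by positivity : 0 ≤ 2 * s * (k + 1 + r))
  -- the only place where `r ≥ 2` enters: the coefficient of `f (y (k + 1)) - f xs` is `≤ 0`
  have hcoef : 2 * s * ((k + 2) * (k + 2 + r) - (k + 1 + r) ^ 2) ≤ 0 := by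
    have hk : (0 : ℝ) ≤ k := k.cast_nonneg
    have : (k + 2) * (k + 2 + r) - (k + 1 + r) ^ 2 ≤ 0 := by nlinarith
    nlinarith
  have hgap := mul_le_mul_of_nonpos_left (half_mul_sq_norm_le_sub hf hgxs (y (k + 1))) hcoef
  have hslack : 0 ≤ s ^ 2 * r * (k + 1 + r) * ‖G‖ ^ 2 := by positivity
  simp only [nagEnergy] at hnorm ⊢
  push_cast at hnorm ⊢
  linarith

theorem summable_sq_mul_sq_norm_gradient_nag
    (hf : ∀ a b, f a + ⟪g a, b - a⟫ + s / 2 * ‖g b - g a‖ ^ 2 ≤ f b)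
    (hgxs : g xs = 0) (hs : 0 < s) (hr : 2 ≤ r) (hx : ∀ k : ℕ, x (k + 1) = y k - s • g (y k))
    (hy : ∀ k : ℕ, y (k + 1) = x (k + 1) + (((k : ℝ)) / ((k : ℝ) + r + 1)) • (x (k + 1) - x k)) :
    Summable fun n : ℕ => (n : ℝ) ^ 2 * ‖g (y n)‖ ^ 2 := by
  have hdecay := summable_of_succ_add_le (nagEnergy_nonneg hf hgxs hs.le (by linarith))
    (fun n => by positivity) (nagEnergy_succ_add_le hf hgxs hs.le hr hx hy)
  refine (summable_nat_add_iff 1).mp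
    (Summable.of_nonneg_of_le (fun n => by positivity) (fun n => ?_)
      (hdecay.mul_left (2 / s ^ 2)))
  have hval : 2 / s ^ 2 * (s ^ 2 * (n + 1) * (n + 1 + r) / 2 * ‖g (y (n + 1))‖ ^ 2)
      = (n + 1) * (n + 1 + r) * ‖g (y (n + 1))‖ ^ 2 := by
    field_simp
  push_cast
  rw [hval]
  gcongr
  nlinarith

end NAG

theorem stmt_9_general {d : ℕ} (f : EuclideanSpace ℝ (Fin d) → ℝ)
    (g : EuclideanSpace ℝ (Fin d) → EuclideanSpace ℝ (Fin d)) (L : ℝ) (hL : 0 < L)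
    (hconv : ConvexOn ℝ Set.univ f)
    (hgrad : ∀ z, HasGradientAt f (g z) z)
    (hlip : ∀ z w, ‖g z - g w‖ ≤ L * ‖z - w‖)
    (xs : EuclideanSpace ℝ (Fin d)) (hmin : ∀ z, f xs ≤ f z)
    (s r : ℝ) (hs : 0 < s) (hsL : s ≤ 1 / L) (hr : 2 ≤ r)
    (x y : ℕ → EuclideanSpace ℝ (Fin d))
    (hx : ∀ k : ℕ, x (k + 1) = y k - s • g (y k))
    (hy : ∀ k : ℕ, y (k + 1) = x (k + 1) + (((k : ℝ)) / ((k : ℝ) + r + 1)) • (x (k + 1) - x k)) :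
    Filter.Tendsto
      (fun k : ℕ => (k : ℝ) ^ 3 *
        (Finset.range (k + 1)).inf' Finset.nonempty_range_add_one (fun i => ‖g (y i)‖ ^ 2))
      Filter.atTop (nhds 0) := by
  have hf : ∀ a b, f a + ⟪g a, b - a⟫ + s / 2 * ‖g b - g a‖ ^ 2 ≤ f b := fun a b => by
    have hstep : s / 2 * ‖g b - g a‖ ^ 2 ≤ ‖g b - g a‖ ^ 2 / (2 * L) := by
      rw [le_div_iff₀ (by positivity)]
      rw [le_div_iff₀ hL] at hsL
      nlinarith [mul_nonneg (sub_nonneg.2 hsL) (sq_nonneg ‖g b - g a‖)]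
    linarith [hconv.add_inner_add_sq_norm_sub_div_le hL hgrad hlip a b]
  have hgxs : g xs = 0 :=
    IsLocalMin.hasGradientAt_eq_zero (Eventually.of_forall hmin) (hgrad xs)
  exact tendsto_cube_mul_inf'_range_of_summable (fun n => sq_nonneg _)
    (summable_sq_mul_sq_norm_gradient_nag hf hgxs hs hr hx hy)

theorem stmt_9 {d : ℕ} (f : EuclideanSpace ℝ (Fin d) → ℝ)
    (g : EuclideanSpace ℝ (Fin d) → EuclideanSpace ℝ (Fin d)) (L : ℝ) (hL : 0 < L)
    (hconv : ConvexOn ℝ Set.univ f)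
    (hgrad : ∀ z, HasGradientAt f (g z) z)
    (hlip : ∀ z w, ‖g z - g w‖ ≤ L * ‖z - w‖)
    (xs : EuclideanSpace ℝ (Fin d)) (hmin : ∀ z, f xs ≤ f z)
    (s r : ℝ) (hs : 0 < s) (hsL : s ≤ 1 / L) (hr : 2 ≤ r)
    (x y : ℕ → EuclideanSpace ℝ (Fin d))
    (hx0 : x 0 = y 0)
    (hx : ∀ k : ℕ, x (k + 1) = y k - s • g (y k))
    (hy : ∀ k : ℕ, y (k + 1) = x (k + 1) + (((k : ℝ)) / ((k : ℝ) + r + 1)) • (x (k + 1) - x k)) :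
    Filter.Tendsto
      (fun k : ℕ => (k : ℝ) ^ 3 *
        (Finset.range (k + 1)).inf' Finset.nonempty_range_add_one (fun i => ‖g (y i)‖ ^ 2))
      Filter.atTop (nhds 0) :=
  stmt_9_general f g L hL hconv hgrad hlip xs hmin s r hs hsL hr x y hx hy
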